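/- (Dual Cheeger upper bound) For a finite connected subset Ω of a weighted graph, λ_max(Ω) ≤ 1 + √(1 - (1 - h̄(Ω))²). -/

import Mathlib

open Finset

variable {V : Type*}

noncomputable def deg (μ : V → V → ℝ) (x : V) : ℝ := ∑ᶠ y, μ x y

noncomputable def eSum (μ : V → V → ℝ) (A B : Finset V) : ℝ :=
  ∑ x ∈ A, ∑ y ∈ B, μ x y

noncomputable def vol (μ : V → V → ℝ) (U : Finset V) : ℝ := ∑ x ∈ U, deg μ x

noncomputable def bdry (μ : V → V → ℝ) (U : Finset V) : ℝ := vol μ U - eSum μ U U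

noncomputable def cheeger (μ : V → V → ℝ) (Ω : Finset V) : ℝ :=
  sInf {r : ℝ | ∃ U : Finset V, U.Nonempty ∧ U ⊆ Ω ∧ r = bdry μ U / vol μ U}

noncomputable def dualCheeger (μ : V → V → ℝ) (Ω : Finset V) : ℝ :=
  sSup {r : ℝ | ∃ V₁ V₂ : Finset V, V₁.Nonempty ∧ V₂.Nonempty ∧ Disjoint V₁ V₂ ∧
    V₁ ⊆ Ω ∧ V₂ ⊆ Ω ∧ r = 2 * eSum μ V₁ V₂ / (vol μ V₁ + vol μ V₂)}

noncomputable def dLap (μ : V → V → ℝ) (Ω : Finset V) (f : V → ℝ) (x : V) : ℝ :=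
  f x - (1 / deg μ x) * ∑ y ∈ Ω, μ x y * f y

def IsDirEigfun (μ : V → V → ℝ) (Ω : Finset V) (lam : ℝ) (f : V → ℝ) : Prop :=
  (∃ x ∈ Ω, f x ≠ 0) ∧ (∀ x ∉ Ω, f x = 0) ∧ ∀ x ∈ Ω, dLap μ Ω f x = lam * f x

def IsDirEig (μ : V → V → ℝ) (Ω : Finset V) (lam : ℝ) : Prop :=
  ∃ f : V → ℝ, IsDirEigfun μ Ω lam f

noncomputable def lam1 (μ : V → V → ℝ) (Ω : Finset V) : ℝ :=
  sInf {l : ℝ | IsDirEig μ Ω l}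

noncomputable def lamMax (μ : V → V → ℝ) (Ω : Finset V) : ℝ :=
  sSup {l : ℝ | IsDirEig μ Ω l}

def ConnectedOn (μ : V → V → ℝ) (Ω : Finset V) : Prop :=
  ∀ x ∈ Ω, ∀ y ∈ Ω,
    Relation.ReflTransGen (fun a b => a ∈ Ω ∧ b ∈ Ω ∧ μ a b ≠ 0) x y

def BipartiteOn (μ : V → V → ℝ) (Ω : Finset V) : Prop :=
  ∃ U₁ U₂ : Finset V, Disjoint U₁ U₂ ∧ (U₁ : Set V) ∪ ↑U₂ = ↑Ω ∧
    (∀ x ∈ U₁, ∀ y ∈ U₁, μ x y = 0) ∧ (∀ x ∈ U₂, ∀ y ∈ U₂, μ x y = 0)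

/- Let `f` be a Dirichlet eigenfunction for `λ > 1`, and split it as `f = u - v` with `u = f⁺`,
`v = f⁻`; all sums run over a finite set `N` containing `Ω` and its neighbours, and
`D = ∑ deg · f²`. The eigenvalue equation gives `2 ∑ μ(x,y) u(x) v(y) ≥ (λ - 1) D`, so
Cauchy–Schwarz applied to `|u(x)² - v(y)²| = |u(x) - v(y)| (u(x) + v(y))` bounds
`∑ μ(x,y) |u(x)² - v(y)²|` by `√(1 - (λ - 1)²) D`; equivalently
`2 ∑ μ(x,y) min (u(x)², v(y)²) ≥ (1 - √(1 - (λ - 1)²)) D`.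
By the layer-cake formula both sides are integrals over `t > 0` of `2 |E(V₁, V₂)|` and of
`vol V₁ + vol V₂`, where `V₁ = {u² > t}` and `V₂ = {v² > t}` are disjoint. Hence for some `t` the
pair `(V₁, V₂)` has dual Cheeger ratio at least `1 - √(1 - (λ - 1)²)`, which rearranges to the
bound. -/

open MeasureTheory

section Graph

variable {μ : V → V → ℝ}

lemma deg_eq_sum_of_support_subset {x : V} {s : Finset V} (hs : ∀ y, μ x y ≠ 0 → y ∈ s) :
    deg μ x = ∑ y ∈ s, μ x y :=
  finsum_eq_sum_of_support_subset _ fun y hy => hs y hy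

lemma sum_le_deg (hnn : ∀ x y, 0 ≤ μ x y) (hfin : ∀ x, (Function.support (μ x)).Finite)
    (x : V) (s : Finset V) : ∑ y ∈ s, μ x y ≤ deg μ x := by
  classical
  rw [deg_eq_sum_of_support_subset (s := s ∪ (hfin x).toFinset)
    fun y hy => mem_union_right _ ((hfin x).mem_toFinset.2 hy)]
  exact sum_le_sum_of_subset_of_nonneg subset_union_left fun y _ _ => hnn x y

lemma eSum_comm (hsymm : ∀ x y, μ x y = μ y x) (A B : Finset V) : eSum μ A B = eSum μ B A := by
  rw [eSum, sum_comm, eSum]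
  simp only [hsymm]

lemma eSum_le_vol (hnn : ∀ x y, 0 ≤ μ x y) (hfin : ∀ x, (Function.support (μ x)).Finite)
    (A B : Finset V) : eSum μ A B ≤ vol μ A :=
  sum_le_sum fun x _ => sum_le_deg hnn hfin x B

lemma vol_pos (hdeg : ∀ x, 0 < deg μ x) {U : Finset V} (hU : U.Nonempty) : 0 < vol μ U :=
  sum_pos (fun x _ => hdeg x) hU

lemma two_mul_eSum_div_le_one (hsymm : ∀ x y, μ x y = μ y x) (hnn : ∀ x y, 0 ≤ μ x y)
    (hfin : ∀ x, (Function.support (μ x)).Finite) (A B : Finset V) :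
    2 * eSum μ A B / (vol μ A + vol μ B) ≤ 1 := by
  have hA := eSum_le_vol hnn hfin A B
  have hB := eSum_le_vol hnn hfin B A
  rw [eSum_comm hsymm] at hB
  have h0 : 0 ≤ eSum μ A B := sum_nonneg fun x _ => sum_nonneg fun y _ => hnn x y
  exact div_le_one_of_le₀ (by linarith) (by linarith)

lemma dualCheeger_le_one (hsymm : ∀ x y, μ x y = μ y x) (hnn : ∀ x y, 0 ≤ μ x y)
    (hfin : ∀ x, (Function.support (μ x)).Finite) (Ω : Finset V) : dualCheeger μ Ω ≤ 1 :=
  Real.sSup_le (by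
    rintro r ⟨A, B, -, -, -, -, -, rfl⟩
    exact two_mul_eSum_div_le_one hsymm hnn hfin A B) zero_le_one

lemma le_dualCheeger (hsymm : ∀ x y, μ x y = μ y x) (hnn : ∀ x y, 0 ≤ μ x y)
    (hfin : ∀ x, (Function.support (μ x)).Finite) {Ω A B : Finset V} (hA : A.Nonempty)
    (hB : B.Nonempty) (hAB : Disjoint A B) (hAΩ : A ⊆ Ω) (hBΩ : B ⊆ Ω) :
    2 * eSum μ A B / (vol μ A + vol μ B) ≤ dualCheeger μ Ω := by
  refine le_csSup ⟨1, ?_⟩ ⟨A, B, hA, hB, hAB, hAΩ, hBΩ, rfl⟩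
  rintro r ⟨A, B, -, -, -, -, -, rfl⟩
  exact two_mul_eSum_div_le_one hsymm hnn hfin A B

lemma exists_finset_neighborhood (hfin : ∀ x, (Function.support (μ x)).Finite) (Ω : Finset V) :
    ∃ N : Finset V, Ω ⊆ N ∧ ∀ x ∈ Ω, ∀ y, μ x y ≠ 0 → y ∈ N := by
  classical
  exact ⟨Ω ∪ Ω.biUnion fun x => (hfin x).toFinset, subset_union_left, fun x hx y hy =>
    mem_union_right _ (mem_biUnion.2 ⟨x, hx, (hfin x).mem_toFinset.2 hy⟩)⟩

variable {Ω N : Finset V} {g : V → ℝ}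

lemma sum_sum_mul_left_eq (hN : ∀ x ∈ Ω, ∀ y, μ x y ≠ 0 → y ∈ N) (hg : ∀ x ∉ Ω, g x = 0) :
    ∑ x ∈ N, ∑ y ∈ N, μ x y * g x = ∑ x ∈ N, deg μ x * g x := by
  refine sum_congr rfl fun x _ => ?_
  by_cases hx : x ∈ Ω
  · rw [← sum_mul, deg_eq_sum_of_support_subset (hN x hx)]
  · simp [hg x hx]

lemma sum_sum_mul_right_eq (hsymm : ∀ x y, μ x y = μ y x)
    (hN : ∀ x ∈ Ω, ∀ y, μ x y ≠ 0 → y ∈ N) (hg : ∀ x ∉ Ω, g x = 0) :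
    ∑ x ∈ N, ∑ y ∈ N, μ x y * g y = ∑ y ∈ N, deg μ y * g y := by
  rw [sum_comm, ← sum_sum_mul_left_eq hN hg]
  simp only [hsymm]

end Graph

lemma posPart_mul_negPart_eq_zero {α : Type*} [Ring α] [LinearOrder α] [IsOrderedRing α] (a : α) :
    a⁺ * a⁻ = 0 := by
  rcases le_total 0 a with h | h <;> simp [h]

lemma sq_eq_posPart_sq_add_negPart_sq {α : Type*} [Ring α] [LinearOrder α] [IsOrderedRing α]
    (a : α) : a ^ 2 = a⁺ ^ 2 + a⁻ ^ 2 := by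
  rcases le_total 0 a with h | h <;> simp [h]

lemma le_one_add_sqrt_of_one_sub_le_sqrt {lam h : ℝ} (hh : h ≤ 1) (hlam : (lam - 1) ^ 2 ≤ 1)
    (hc : 1 - h ≤ √(1 - (lam - 1) ^ 2)) : lam ≤ 1 + √(1 - (1 - h) ^ 2) := by
  have hsq : (1 - h) ^ 2 ≤ 1 - (lam - 1) ^ 2 := by
    calc (1 - h) ^ 2 ≤ √(1 - (lam - 1) ^ 2) ^ 2 := pow_le_pow_left₀ (by linarith) hc 2
      _ = 1 - (lam - 1) ^ 2 := Real.sq_sqrt (by linarith)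
  linarith [Real.le_sqrt_of_sq_le (x := lam - 1) (y := 1 - (1 - h) ^ 2) (by linarith)]

lemma one_sub_sqrt_mul_le_of_sq_sub_le {D E s : ℝ} (hD : 0 ≤ D) (h : (D - 2 * E) ^ 2 ≤ s * D ^ 2) :
    (1 - √s) * D ≤ 2 * E := by
  have : D - 2 * E ≤ √s * D :=
    calc D - 2 * E ≤ √(s * D ^ 2) := (le_abs_self _).trans (Real.abs_le_sqrt h)
      _ = √s * D := by rw [Real.sqrt_mul' _ (sq_nonneg D), Real.sqrt_sq hD]
  linarith

section Coarea

open Set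

lemma integrableOn_indicator_Iio_one (a M : ℝ) :
    IntegrableOn ((Iio a).indicator (1 : ℝ → ℝ)) (Ioo 0 M) :=
  (integrableOn_const (measure_Ioo_lt_top (a := (0 : ℝ)) (b := M)).ne).indicator measurableSet_Iio

lemma setIntegral_indicator_Iio_one {a M : ℝ} (ha : 0 ≤ a) (haM : a ≤ M) :
    ∫ t in Ioo 0 M, (Iio a).indicator 1 t = a := by
  rw [integral_indicator measurableSet_Iio, Measure.restrict_restrict measurableSet_Iio,
    Iio_inter_Ioo, min_eq_left haM]
  simp [ha]

lemma integrableOn_sum_mul_indicator_Iio {ι : Type*} (s : Finset ι) (w a : ι → ℝ) (M : ℝ) :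
    IntegrableOn (fun t => ∑ i ∈ s, w i * (Iio (a i)).indicator 1 t) (Ioo 0 M) :=
  integrable_finsetSum _ fun _ _ => (integrableOn_indicator_Iio_one _ _).const_mul _

lemma integral_sum_mul_indicator_Iio {ι : Type*} {s : Finset ι} {w a : ι → ℝ} {M : ℝ}
    (ha : ∀ i ∈ s, a i ∈ Icc 0 M) :
    ∫ t in Ioo 0 M, ∑ i ∈ s, w i * (Iio (a i)).indicator 1 t = ∑ i ∈ s, w i * a i := by
  rw [integral_finsetSum _ fun i _ => (integrableOn_indicator_Iio_one _ _).const_mul _]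
  refine Finset.sum_congr rfl fun i hi => ?_
  rw [integral_const_mul, setIntegral_indicator_Iio_one (ha i hi).1 (ha i hi).2]

variable {μ : V → V → ℝ}

lemma vol_filter_lt (s : Finset V) (g : V → ℝ) (t : ℝ) :
    vol μ {x ∈ s | t < g x} = ∑ x ∈ s, deg μ x * (Iio (g x)).indicator 1 t := by
  rw [vol, Finset.sum_filter]
  refine Finset.sum_congr rfl fun x _ => ?_
  by_cases h : t < g x <;> simp [h]

lemma eSum_filter_lt (s : Finset V) (g h : V → ℝ) (t : ℝ) :
    eSum μ {x ∈ s | t < g x} {x ∈ s | t < h x} =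
      ∑ p ∈ s ×ˢ s, μ p.1 p.2 * (Iio (min (g p.1) (h p.2))).indicator 1 t := by
  rw [eSum, Finset.sum_product, Finset.sum_filter]
  refine Finset.sum_congr rfl fun x _ => ?_
  rw [Finset.sum_filter]
  by_cases hx : t < g x <;> simp [hx, Set.indicator_apply]

lemma exists_superlevel_vol_le_eSum {s : Finset V} {g h : V → ℝ} {M κ : ℝ} (hM : 0 < M)
    (hg : ∀ x ∈ s, g x ∈ Icc 0 M) (hh : ∀ x ∈ s, h x ∈ Icc 0 M)
    (hsum : κ * ∑ x ∈ s, deg μ x * (g x + h x) ≤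
      2 * ∑ x ∈ s, ∑ y ∈ s, μ x y * min (g x) (h y)) :
    ∃ t ∈ Ioo 0 M, κ * (vol μ {x ∈ s | t < g x} + vol μ {x ∈ s | t < h x}) ≤
      2 * eSum μ {x ∈ s | t < g x} {x ∈ s | t < h x} := by
  have hmin : ∀ p ∈ s ×ˢ s, min (g p.1) (h p.2) ∈ Icc 0 M := fun p hp =>
    have hp := Finset.mem_product.1 hp
    ⟨le_min (hg _ hp.1).1 (hh _ hp.2).1, (min_le_left _ _).trans (hg _ hp.1).2⟩
  set φ : ℝ → ℝ := fun t => κ * (vol μ {x ∈ s | t < g x} + vol μ {x ∈ s | t < h x}) -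
    2 * eSum μ {x ∈ s | t < g x} {x ∈ s | t < h x}
  have hφ : φ = fun t => κ * (∑ x ∈ s, deg μ x * (Iio (g x)).indicator 1 t +
      ∑ x ∈ s, deg μ x * (Iio (h x)).indicator 1 t) -
      2 * ∑ p ∈ s ×ˢ s, μ p.1 p.2 * (Iio (min (g p.1) (h p.2))).indicator 1 t := by
    simp only [φ, vol_filter_lt, eSum_filter_lt]
  have Ig := integrableOn_sum_mul_indicator_Iio s (deg μ) g M
  have Ih := integrableOn_sum_mul_indicator_Iio s (deg μ) h M
  have Imin := integrableOn_sum_mul_indicator_Iio (s ×ˢ s) (fun p => μ p.1 p.2)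
    (fun p => min (g p.1) (h p.2)) M
  have hint : IntegrableOn φ (Ioo 0 M) := by
    rw [hφ]
    exact ((Ig.add Ih).const_mul κ).sub (Imin.const_mul 2)
  have hφint : ∫ t in Ioo 0 M, φ t ≤ 0 := by
    simp only [hφ]
    rw [integral_sub, integral_const_mul, integral_const_mul, integral_add Ig Ih,
      integral_sum_mul_indicator_Iio hg, integral_sum_mul_indicator_Iio hh,
      integral_sum_mul_indicator_Iio hmin, ← Finset.sum_add_distrib, Finset.sum_product]
    · simpa only [mul_add] using sub_nonpos.2 hsum
    · exact (Ig.add Ih).const_mul κ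
    · exact Imin.const_mul 2
  obtain ⟨t, ht, hle⟩ := exists_le_setAverage (by simp [hM]) (by simp) hint
  refine ⟨t, ht, sub_nonpos.1 (hle.trans ?_)⟩
  rw [setAverage_eq]
  exact smul_nonpos_of_nonneg_of_nonpos (by positivity) hφint

lemma le_dualCheeger_of_le_sum_min (hsymm : ∀ x y, μ x y = μ y x) (hnn : ∀ x y, 0 ≤ μ x y)
    (hfin : ∀ x, (Function.support (μ x)).Finite) (hdeg : ∀ x, 0 < deg μ x)
    {Ω N : Finset V} {g h : V → ℝ} {κ : ℝ} (hκ : 0 < κ) (hg : ∀ x, 0 ≤ g x) (hh : ∀ x, 0 ≤ h x)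
    (hgh : ∀ x, g x * h x = 0) (hgΩ : ∀ x ∉ Ω, g x = 0) (hhΩ : ∀ x ∉ Ω, h x = 0)
    {x₀ : V} (hx₀ : x₀ ∈ N) (hpos : 0 < g x₀ + h x₀)
    (hsum : κ * ∑ x ∈ N, deg μ x * (g x + h x) ≤
      2 * ∑ x ∈ N, ∑ y ∈ N, μ x y * min (g x) (h y)) :
    κ ≤ dualCheeger μ Ω := by
  obtain ⟨z, hzN, hz⟩ := N.exists_max_image (fun x => g x + h x) ⟨x₀, hx₀⟩
  have hM : 0 < g z + h z := hpos.trans_le (hz x₀ hx₀)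
  obtain ⟨t, ⟨ht, htz⟩, hcut⟩ := exists_superlevel_vol_le_eSum hM
    (fun x hx => ⟨hg x, by linarith [hz x hx, hh x]⟩)
    (fun x hx => ⟨hh x, by linarith [hz x hx, hg x]⟩) hsum
  set A := {x ∈ N | t < g x}
  set B := {x ∈ N | t < h x}
  have hsubΩ {k : V → ℝ} (hk : ∀ x ∉ Ω, k x = 0) : {x ∈ N | t < k x} ⊆ Ω := fun x hx => by
    by_contra hxΩ
    linarith [(Finset.mem_filter.1 hx).2, hk x hxΩ]
  have hAB : Disjoint A B := Finset.disjoint_left.2 fun x hxA hxB => by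
    have hgx := (Finset.mem_filter.1 hxA).2
    have hhx := (Finset.mem_filter.1 hxB).2
    rcases mul_eq_zero.1 (hgh x) with h0 | h0 <;> linarith
  have hz : z ∈ A ∨ z ∈ B := by
    rcases mul_eq_zero.1 (hgh z) with h0 | h0
    · exact Or.inr (Finset.mem_filter.2 ⟨hzN, by linarith⟩)
    · exact Or.inl (Finset.mem_filter.2 ⟨hzN, by linarith⟩)
  have hA : A.Nonempty := by
    by_contra hA
    rw [Finset.not_nonempty_iff_eq_empty] at hA
    have hvolB := vol_pos hdeg ⟨z, hz.resolve_left (by simp [hA])⟩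
    rw [hA, show vol μ ∅ = 0 from Finset.sum_empty, show eSum μ ∅ B = 0 from Finset.sum_empty]
      at hcut
    nlinarith
  have hB : B.Nonempty := by
    by_contra hB
    rw [Finset.not_nonempty_iff_eq_empty] at hB
    have hvolA := vol_pos hdeg ⟨z, hz.resolve_right (by simp [hB])⟩
    rw [hB, show vol μ ∅ = 0 from Finset.sum_empty, show eSum μ A ∅ = 0 by simp [eSum]] at hcut
    nlinarith
  calc κ ≤ 2 * eSum μ A B / (vol μ A + vol μ B) :=
        (le_div_iff₀ (add_pos (vol_pos hdeg hA) (vol_pos hdeg hB))).2 hcut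
    _ ≤ dualCheeger μ Ω := le_dualCheeger hsymm hnn hfin hA hB hAB (hsubΩ hgΩ) (hsubΩ hhΩ)

end Coarea

section Spectral

variable {μ : V → V → ℝ}

lemma neg_sum_sum_mul_le (hsymm : ∀ x y, μ x y = μ y x) (hnn : ∀ x y, 0 ≤ μ x y)
    (N : Finset V) (f : V → ℝ) :
    -∑ x ∈ N, ∑ y ∈ N, μ x y * (f x * f y) ≤ 2 * ∑ x ∈ N, ∑ y ∈ N, μ x y * ((f x)⁺ * (f y)⁻) := by
  have hswap : ∑ x ∈ N, ∑ y ∈ N, μ x y * ((f x)⁻ * (f y)⁺) =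
      ∑ x ∈ N, ∑ y ∈ N, μ x y * ((f x)⁺ * (f y)⁻) := by
    rw [Finset.sum_comm]
    exact Finset.sum_congr rfl fun x _ => Finset.sum_congr rfl fun y _ => by rw [hsymm]; ring
  calc -∑ x ∈ N, ∑ y ∈ N, μ x y * (f x * f y)
      ≤ ∑ x ∈ N, ∑ y ∈ N, μ x y * ((f x)⁺ * (f y)⁻ + (f x)⁻ * (f y)⁺) := by
        simp only [← Finset.sum_neg_distrib]
        gcongr with x _ y _
        rw [← mul_neg]
        refine mul_le_mul_of_nonneg_left ?_ (hnn x y)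
        have hfxy : -(f x * f y) = (f x)⁺ * (f y)⁻ + (f x)⁻ * (f y)⁺ -
            ((f x)⁺ * (f y)⁺ + (f x)⁻ * (f y)⁻) := by
          conv_lhs => rw [← posPart_sub_negPart (f x), ← posPart_sub_negPart (f y)]
          ring
        have : 0 ≤ (f x)⁺ * (f y)⁺ + (f x)⁻ * (f y)⁻ := by positivity
        linarith
    _ = 2 * ∑ x ∈ N, ∑ y ∈ N, μ x y * ((f x)⁺ * (f y)⁻) := by
        simp only [mul_add, Finset.sum_add_distrib, hswap]
        ring

lemma IsDirEigfun.sum_sum_mul_eq (hdeg : ∀ x, 0 < deg μ x) {Ω N : Finset V} {lam : ℝ}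
    {f : V → ℝ} (hf : IsDirEigfun μ Ω lam f) (hΩN : Ω ⊆ N) :
    ∑ x ∈ N, ∑ y ∈ N, μ x y * (f x * f y) = (1 - lam) * ∑ x ∈ N, deg μ x * f x ^ 2 := by
  obtain ⟨-, hzero, heig⟩ := hf
  rw [Finset.mul_sum]
  refine Finset.sum_congr rfl fun x _ => ?_
  by_cases hx : x ∈ Ω
  · have hsum : ∑ y ∈ Ω, μ x y * f y = (1 - lam) * (deg μ x * f x) := by
      have := heig x hx
      rw [dLap] at this
      field_simp [(hdeg x).ne'] at this
      linarith
    calc ∑ y ∈ N, μ x y * (f x * f y) = f x * ∑ y ∈ Ω, μ x y * f y := by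
          rw [Finset.mul_sum, ← Finset.sum_subset hΩN fun y _ hy => by simp [hzero y hy]]
          exact Finset.sum_congr rfl fun y _ => by ring
      _ = (1 - lam) * (deg μ x * f x ^ 2) := by rw [hsum]; ring
  · simp [hzero x hx]

lemma sq_sum_sum_abs_sub_le (hnn : ∀ x y, 0 ≤ μ x y) (N : Finset V) {u v : V → ℝ}
    (hu : ∀ x, 0 ≤ u x) (hv : ∀ x, 0 ≤ v x) :
    (∑ x ∈ N, ∑ y ∈ N, μ x y * |u x ^ 2 - v y ^ 2|) ^ 2 ≤
      (∑ x ∈ N, ∑ y ∈ N, μ x y * (u x - v y) ^ 2) *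
        ∑ x ∈ N, ∑ y ∈ N, μ x y * (u x + v y) ^ 2 := by
  simp only [← Finset.sum_product' N N]
  refine Finset.sum_sq_le_sum_mul_sum_of_sq_le_mul _ (fun p _ => by have := hnn p.1 p.2; positivity)
    (fun p _ => by have := hnn p.1 p.2; positivity) fun p _ => le_of_eq ?_
  rw [show u p.1 ^ 2 - v p.2 ^ 2 = (u p.1 - v p.2) * (u p.1 + v p.2) by ring, abs_mul,
    abs_of_nonneg (add_nonneg (hu _) (hv _)), mul_pow, mul_pow, sq_abs]
  ring

lemma IsDirEigfun.sq_sub_two_mul_sum_min_le (hsymm : ∀ x y, μ x y = μ y x) (hnn : ∀ x y, 0 ≤ μ x y)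
    (hdeg : ∀ x, 0 < deg μ x) {Ω N : Finset V} {lam : ℝ} {f : V → ℝ}
    (hf : IsDirEigfun μ Ω lam f) (hlam : 1 ≤ lam) (hΩN : Ω ⊆ N)
    (hN : ∀ x ∈ Ω, ∀ y, μ x y ≠ 0 → y ∈ N) :
    (∑ x ∈ N, deg μ x * ((f x)⁺ ^ 2 + (f x)⁻ ^ 2) -
        2 * ∑ x ∈ N, ∑ y ∈ N, μ x y * min ((f x)⁺ ^ 2) ((f y)⁻ ^ 2)) ^ 2 ≤
      (1 - (lam - 1) ^ 2) * (∑ x ∈ N, deg μ x * ((f x)⁺ ^ 2 + (f x)⁻ ^ 2)) ^ 2 := by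
  set D := ∑ x ∈ N, deg μ x * ((f x)⁺ ^ 2 + (f x)⁻ ^ 2)
  set B := ∑ x ∈ N, ∑ y ∈ N, μ x y * ((f x)⁺ * (f y)⁻)
  set E := ∑ x ∈ N, ∑ y ∈ N, μ x y * min ((f x)⁺ ^ 2) ((f y)⁻ ^ 2)
  have hD : 0 ≤ D := Finset.sum_nonneg fun x _ => by have := hdeg x; positivity
  have hP : ∑ x ∈ N, ∑ y ∈ N, μ x y * ((f x)⁺ ^ 2 + (f y)⁻ ^ 2) = D := by
    simp only [mul_add, Finset.sum_add_distrib]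
    rw [sum_sum_mul_left_eq hN fun x hx => by simp [hf.2.1 x hx],
      sum_sum_mul_right_eq hsymm hN fun x hx => by simp [hf.2.1 x hx], ← Finset.sum_add_distrib]
    simp only [D, mul_add]
  have hB : (lam - 1) * D ≤ 2 * B := by
    have h := neg_sum_sum_mul_le hsymm hnn N f
    rw [hf.sum_sum_mul_eq hdeg hΩN] at h
    simp only [sq_eq_posPart_sq_add_negPart_sq (f _)] at h
    linarith
  have hK : ∑ x ∈ N, ∑ y ∈ N, μ x y * ((f x)⁺ - (f y)⁻) ^ 2 = D - 2 * B := by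
    simp only [← hP, B, Finset.mul_sum, ← Finset.sum_sub_distrib]
    exact Finset.sum_congr rfl fun x _ => Finset.sum_congr rfl fun y _ => by ring
  have hL : ∑ x ∈ N, ∑ y ∈ N, μ x y * ((f x)⁺ + (f y)⁻) ^ 2 = D + 2 * B := by
    simp only [← hP, B, Finset.mul_sum, ← Finset.sum_add_distrib]
    exact Finset.sum_congr rfl fun x _ => Finset.sum_congr rfl fun y _ => by ring
  have hC : ∑ x ∈ N, ∑ y ∈ N, μ x y * |(f x)⁺ ^ 2 - (f y)⁻ ^ 2| = D - 2 * E := by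
    simp only [← hP, E, Finset.mul_sum, ← Finset.sum_sub_distrib]
    refine Finset.sum_congr rfl fun x _ => Finset.sum_congr rfl fun y _ => ?_
    rw [← max_sub_min_eq_abs']
    linear_combination μ x y * min_add_max ((f x)⁺ ^ 2) ((f y)⁻ ^ 2)
  have hCS := sq_sum_sum_abs_sub_le hnn N (u := fun x => (f x)⁺) (v := fun x => (f x)⁻)
    (fun x => posPart_nonneg _) (fun x => negPart_nonneg _)
  rw [hK, hL, hC] at hCS
  have hB' : 0 ≤ (lam - 1) * D := mul_nonneg (by linarith) hD
  calc (D - 2 * E) ^ 2 ≤ (D - 2 * B) * (D + 2 * B) := hCS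
    _ = D ^ 2 - (2 * B) ^ 2 := by ring
    _ ≤ D ^ 2 - ((lam - 1) * D) ^ 2 := by gcongr
    _ = (1 - (lam - 1) ^ 2) * D ^ 2 := by ring

lemma IsDirEigfun.le_one_add_sqrt (hsymm : ∀ x y, μ x y = μ y x) (hnn : ∀ x y, 0 ≤ μ x y)
    (hfin : ∀ x, (Function.support (μ x)).Finite) (hdeg : ∀ x, 0 < deg μ x)
    {Ω : Finset V} {lam : ℝ} {f : V → ℝ} (hf : IsDirEigfun μ Ω lam f) :
    lam ≤ 1 + √(1 - (1 - dualCheeger μ Ω) ^ 2) := by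
  rcases le_or_gt lam 1 with hlam | hlam
  · linarith [Real.sqrt_nonneg (1 - (1 - dualCheeger μ Ω) ^ 2)]
  obtain ⟨N, hΩN, hN⟩ := exists_finset_neighborhood hfin Ω
  obtain ⟨x₀, hx₀Ω, hx₀⟩ := hf.1
  set D := ∑ x ∈ N, deg μ x * ((f x)⁺ ^ 2 + (f x)⁻ ^ 2)
  set E := ∑ x ∈ N, ∑ y ∈ N, μ x y * min ((f x)⁺ ^ 2) ((f y)⁻ ^ 2)
  have hpos : 0 < (f x₀)⁺ ^ 2 + (f x₀)⁻ ^ 2 := by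
    rw [← sq_eq_posPart_sq_add_negPart_sq]
    positivity
  have hD : 0 < D := Finset.sum_pos' (fun x _ => by have := hdeg x; positivity)
    ⟨x₀, hΩN hx₀Ω, mul_pos (hdeg x₀) hpos⟩
  have hDE : (D - 2 * E) ^ 2 ≤ (1 - (lam - 1) ^ 2) * D ^ 2 :=
    hf.sq_sub_two_mul_sum_min_le hsymm hnn hdeg hlam.le hΩN hN
  have hs : (lam - 1) ^ 2 ≤ 1 := sub_nonneg.1 <| le_of_mul_le_mul_right
    (by rw [zero_mul]; exact (sq_nonneg _).trans hDE) (by positivity)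
  have hc : √(1 - (lam - 1) ^ 2) < 1 := (Real.sqrt_lt' one_pos).2 (by nlinarith)
  have hcut : (1 - √(1 - (lam - 1) ^ 2)) * D ≤ 2 * E := one_sub_sqrt_mul_le_of_sq_sub_le hD.le hDE
  have hcheeger : 1 - √(1 - (lam - 1) ^ 2) ≤ dualCheeger μ Ω :=
    le_dualCheeger_of_le_sum_min hsymm hnn hfin hdeg (g := fun x => (f x)⁺ ^ 2)
      (h := fun x => (f x)⁻ ^ 2) (sub_pos.2 hc) (fun _ => sq_nonneg _) (fun _ => sq_nonneg _)
      (fun x => by rw [← mul_pow, posPart_mul_negPart_eq_zero, zero_pow two_ne_zero])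
      (fun x hx => by simp [hf.2.1 x hx]) (fun x hx => by simp [hf.2.1 x hx]) (hΩN hx₀Ω) hpos hcut
  exact le_one_add_sqrt_of_one_sub_le_sqrt (dualCheeger_le_one hsymm hnn hfin Ω) hs
    (by linarith)

end Spectral

theorem stmt11_general {V : Type*} (μ : V → V → ℝ) (hsymm : ∀ x y, μ x y = μ y x) (hnn : ∀ x y, 0 ≤ μ x y)
    (hfin : ∀ x : V, (Function.support (μ x)).Finite) (hdeg : ∀ x : V, 0 < deg μ x)
    (Ω : Finset V) :
    lamMax μ Ω ≤ 1 + Real.sqrt (1 - (1 - dualCheeger μ Ω) ^ 2) :=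
  Real.sSup_le (fun _ ⟨_, hf⟩ => hf.le_one_add_sqrt hsymm hnn hfin hdeg) (by positivity)

theorem stmt11 {V : Type*} [Infinite V] (μ : V → V → ℝ) (hsymm : ∀ x y, μ x y = μ y x) (hnn : ∀ x y, 0 ≤ μ x y)
    (hfin : ∀ x : V, (Function.support (μ x)).Finite) (hdeg : ∀ x : V, 0 < deg μ x)
    (hconnG : ∀ x y : V, Relation.ReflTransGen (fun a b => μ a b ≠ 0) x y)
    (Ω : Finset V) (hconn : ConnectedOn μ Ω) (hcard : 2 ≤ Ω.card) :
    lamMax μ Ω ≤ 1 + Real.sqrt (1 - (1 - dualCheeger μ Ω) ^ 2) :=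
  stmt11_general μ hsymm hnn hfin hdeg Ω
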